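/- arXiv:1705.03216 — 6 statements merged into one kernel-verified Lean document; each statement's English description precedes it below -/
import Mathlib

section
/- Let e : ℝ → ℝ be a twice differentiable continuous function satisfying the closed-loop iPI error equation e'(t) + K_P · e(t) + K_I · ∫₀ᵗ e(s) ds = 0 for every t ≥ 0, where K_P > 0 and K_I > 0. Then e(t) → 0 as t → +∞. -/
/-!
Write `I t = ∫₀ᵗ e`. On `[0, ∞)` the pair `(I, e)` solves the damped oscillator `I' = e`,
`e' = -K_P e - K_I I`, for which
`V = K_I I² + (K_P I + e)² / 2 + e² / 2` is a strict Lyapunov function: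
`V' = -K_P (K_I I² + e²) ≤ -c V` with `c = K_P K_I / (K_P² + 2 K_I)`.
Grönwall gives `e² ≤ 2 V ≤ 2 V(0) exp(-c t) → 0`.
-/

open Filter Real Set Topology

theorem le_mul_exp_of_hasDerivAt_le_neg_mul {f f' : ℝ → ℝ} {c : ℝ}
    (hf : ∀ t, 0 ≤ t → HasDerivAt f (f' t) t) (hbound : ∀ t, 0 ≤ t → f' t ≤ -c * f t)
    {t : ℝ} (ht : 0 ≤ t) : f t ≤ f 0 * exp (-c * t) := by
  have hcont : ContinuousOn f (Icc 0 t) := fun s hs => (hf s hs.1).continuousAt.continuousWithinAt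
  have := le_gronwallBound_of_liminf_deriv_right_le (K := -c) (ε := 0) hcont
    (fun s hs _ hr => (hf s hs.1).hasDerivWithinAt.liminf_right_slope_le hr) le_rfl
    (fun s hs => (add_zero (-c * f s)).symm ▸ hbound s hs.1) t ⟨ht, le_rfl⟩
  rwa [gronwallBound_ε0, sub_zero] at this

section DampedOscillator

variable (a b : ℝ)

noncomputable def oscillatorLyapunov (x v : ℝ) : ℝ :=
  b * x ^ 2 + (a * x + v) ^ 2 / 2 + v ^ 2 / 2

variable {a b}

theorem sq_le_two_mul_oscillatorLyapunov (hb : 0 ≤ b) (x v : ℝ) :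
    v ^ 2 ≤ 2 * oscillatorLyapunov a b x v := by
  unfold oscillatorLyapunov
  nlinarith [mul_nonneg hb (sq_nonneg x), sq_nonneg (a * x + v)]

theorem mul_oscillatorLyapunov_le (ha : 0 ≤ a) (hb : 0 < b) (x v : ℝ) :
    a * b / (a ^ 2 + 2 * b) * oscillatorLyapunov a b x v ≤ a * (b * x ^ 2 + v ^ 2) := by
  rw [div_mul_eq_mul_div, div_le_iff₀ (by positivity), oscillatorLyapunov]
  nlinarith [mul_nonneg (mul_nonneg ha hb.le) (sq_nonneg (a * x - v)),
    mul_nonneg ha (mul_nonneg (sq_nonneg a) (sq_nonneg v)),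
    mul_nonneg ha (mul_nonneg (sq_nonneg b) (sq_nonneg x)),
    mul_nonneg (mul_nonneg ha hb.le) (sq_nonneg v)]

theorem hasDerivAt_oscillatorLyapunov {x v : ℝ → ℝ} {t : ℝ} (hx : HasDerivAt x (v t) t)
    (hv : HasDerivAt v (-a * v t - b * x t) t) :
    HasDerivAt (fun s => oscillatorLyapunov a b (x s) (v s))
      (-a * (b * x t ^ 2 + v t ^ 2)) t := by
  have := (((hx.pow 2).const_mul b).add ((((hx.const_mul a).add hv).pow 2).div_const 2)).add
    ((hv.pow 2).div_const 2)
  exact this.congr_deriv (by simp only [Pi.add_apply]; push_cast; ring)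

theorem tendsto_zero_of_dampedOscillator (ha : 0 < a) (hb : 0 < b) {x v : ℝ → ℝ}
    (hx : ∀ t, 0 ≤ t → HasDerivAt x (v t) t)
    (hv : ∀ t, 0 ≤ t → HasDerivAt v (-a * v t - b * x t) t) :
    Tendsto v atTop (𝓝 0) := by
  set V := fun s => oscillatorLyapunov a b (x s) (v s)
  set c := a * b / (a ^ 2 + 2 * b)
  have hdecay : ∀ t, 0 ≤ t → V t ≤ V 0 * exp (-c * t) := by
    refine fun t ht => le_mul_exp_of_hasDerivAt_le_neg_mul
      (fun s hs => hasDerivAt_oscillatorLyapunov (hx s hs) (hv s hs)) (fun s _ => ?_) ht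
    linarith [mul_oscillatorLyapunov_le ha.le hb (x s) (v s)]
  have hsq : Tendsto (fun t => v t ^ 2) atTop (𝓝 0) := by
    have hbound : Tendsto (fun t => 2 * V 0 * exp (-c * t)) atTop (𝓝 0) := by
      have hc : 0 < c := by positivity
      simpa using (tendsto_exp_atBot.comp
        (tendsto_id.const_mul_atTop_of_neg (neg_neg_of_pos hc))).const_mul (2 * V 0)
    refine tendsto_of_tendsto_of_tendsto_of_le_of_le' tendsto_const_nhds hbound
      (Eventually.of_forall fun t => sq_nonneg _) ?_
    filter_upwards [eventually_ge_atTop 0] with t ht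
    linarith [sq_le_two_mul_oscillatorLyapunov (a := a) hb.le (x t) (v t), hdecay t ht]
  rw [tendsto_zero_iff_abs_tendsto_zero, Function.comp_def]
  simpa [sqrt_sq_eq_abs] using hsq.sqrt

end DampedOscillator

theorem iPI_error_tends_to_zero_general
    (e : ℝ → ℝ) (K_P K_I : ℝ) (hKP : 0 < K_P) (hKI : 0 < K_I)
    (hder : Differentiable ℝ e)
    (heq : ∀ t, 0 ≤ t →
      deriv e t + K_P * e t + K_I * ∫ s in (0:ℝ)..t, e s = 0) :
    Tendsto e atTop (nhds 0) := by
  have hI : ∀ t, HasDerivAt (fun t => ∫ s in (0:ℝ)..t, e s) (e t) t := fun t =>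
    hder.continuous.integral_hasStrictDerivAt 0 t |>.hasDerivAt
  refine tendsto_zero_of_dampedOscillator hKP hKI (fun t _ => hI t) fun t ht => ?_
  have he : deriv e t = -K_P * e t - K_I * ∫ s in (0:ℝ)..t, e s := by linarith [heq t ht]
  exact he ▸ (hder t).hasDerivAt

/-- Asymptotic stability of the closed-loop iPI error equation
e' + K_P e + K_I ∫₀ᵗ e = 0 for positive gains: the error tends to 0 at +∞. -/
theorem iPI_error_tends_to_zero
    (e : ℝ → ℝ) (K_P K_I : ℝ) (hKP : 0 < K_P) (hKI : 0 < K_I)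
    (hcont : Continuous e)
    (hder : Differentiable ℝ e) (hder2 : Differentiable ℝ (deriv e))
    (heq : ∀ t, 0 ≤ t →
      deriv e t + K_P * e t + K_I * ∫ s in (0:ℝ)..t, e s = 0) :
    Tendsto e atTop (nhds 0) :=
  iPI_error_tends_to_zero_general e K_P K_I hKP hKI hder heq
end

section
/- Let τ > 0, α, F ∈ ℝ, let u : ℝ → ℝ be continuous, and let z : ℝ → ℝ be differentiable with z'(t) = F + α · u(t) for all t in the interval [t₀, t₀ + τ] (i.e. the unknown term of the first-order ultra-local model is constant on this window). Then the algebraic estimator recovers F exactly: F = -(6/τ³) · ∫₀^τ [ (τ - 2σ) · z(t₀ + σ) + α · σ(τ - σ) · u(t₀ + σ) ] dσ. In particular the estimate is independent of the initial condition z(t₀) and is obtained in finite time τ (non-asymptotically). -/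
/-!
Multiplying the model `y' = F + α u` by the weight `σ (τ - σ)`, which vanishes at both ends of
the window, and integrating by parts removes the boundary values of `y` (hence the initial
condition): `∫ (τ - 2σ) y + σ (τ - σ) α u = -F ∫ σ (τ - σ) = -F τ³ / 6`.
-/

open MeasureTheory Set

namespace AlgebraicEstimator

theorem hasDerivAt_mul_sub_self (τ σ : ℝ) :
    HasDerivAt (fun σ => σ * (τ - σ)) (τ - 2 * σ) σ :=
  ((hasDerivAt_id' σ).mul ((hasDerivAt_id' σ).const_sub τ)).congr_deriv (by ring)

theorem integral_mul_sub_self (τ : ℝ) : ∫ σ in (0:ℝ)..τ, σ * (τ - σ) = τ ^ 3 / 6 := by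
  have hderiv : ∀ σ ∈ uIcc 0 τ,
      HasDerivAt (fun σ : ℝ => τ * σ ^ 2 / 2 - σ ^ 3 / 3) (σ * (τ - σ)) σ := by
    intro σ _
    exact ((((hasDerivAt_pow 2 σ).const_mul τ).div_const 2).sub
      ((hasDerivAt_pow 3 σ).div_const 3)).congr_deriv (by push_cast; ring)
  rw [intervalIntegral.integral_eq_sub_of_hasDerivAt hderiv
    ((by fun_prop : Continuous fun σ : ℝ => σ * (τ - σ)).intervalIntegrable 0 τ)]
  ring

theorem integral_weighted_eq_of_hasDerivAt {y g : ℝ → ℝ} {τ c : ℝ}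
    (hy : ∀ σ ∈ uIcc 0 τ, HasDerivAt y (c + g σ) σ) (hg : IntervalIntegrable g volume 0 τ) :
    ∫ σ in (0:ℝ)..τ, ((τ - 2 * σ) * y σ + σ * (τ - σ) * g σ) = -(c * τ ^ 3 / 6) := by
  have hy_cont : ContinuousOn y (uIcc 0 τ) := fun σ hσ =>
    (hy σ hσ).continuousAt.continuousWithinAt
  have hparts : ∫ σ in (0:ℝ)..τ, ((τ - 2 * σ) * y σ + σ * (τ - σ) * (c + g σ)) = 0 := by
    rw [intervalIntegral.integral_deriv_mul_eq_sub (fun σ _ => hasDerivAt_mul_sub_self τ σ) hy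
      ((by fun_prop : Continuous fun σ : ℝ => τ - 2 * σ).intervalIntegrable 0 τ)
      (intervalIntegrable_const.add hg)]
    ring
  have hint : IntervalIntegrable (fun σ => (τ - 2 * σ) * y σ + σ * (τ - σ) * g σ) volume 0 τ :=
    (((by fun_prop : Continuous fun σ : ℝ => τ - 2 * σ).continuousOn.mul
      hy_cont).intervalIntegrable).add
      (hg.continuousOn_mul (by fun_prop : Continuous fun σ : ℝ => σ * (τ - σ)).continuousOn)
  have hsplit := intervalIntegral.integral_add hint
    ((by fun_prop : Continuous fun σ : ℝ => c * (σ * (τ - σ))).intervalIntegrable 0 τ)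
  have hregroup : ∫ σ in (0:ℝ)..τ,
      ((τ - 2 * σ) * y σ + σ * (τ - σ) * g σ + c * (σ * (τ - σ))) =
      ∫ σ in (0:ℝ)..τ, ((τ - 2 * σ) * y σ + σ * (τ - σ) * (c + g σ)) :=
    intervalIntegral.integral_congr fun σ _ => by ring
  rw [intervalIntegral.integral_const_mul, integral_mul_sub_self, hregroup, hparts] at hsplit
  linarith

end AlgebraicEstimator

open AlgebraicEstimator in
/-- First-order algebraic estimator of the model-free setting: if the
ultra-local model z' = F + α u holds with F constant on the window
[t₀, t₀ + τ], then the estimator recovers F exactly, in finite time and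
independently of the initial condition z(t₀). -/
theorem first_order_algebraic_estimator_exact
    (τ α F : ℝ) (hτ : 0 < τ) (u z : ℝ → ℝ) (hu : Continuous u) (t₀ : ℝ)
    (hz : ∀ t ∈ Set.Icc t₀ (t₀ + τ), HasDerivAt z (F + α * u t) t) :
    F = -(6 / τ ^ 3) *
      ∫ σ in (0:ℝ)..τ,
        ((τ - 2 * σ) * z (t₀ + σ) + α * σ * (τ - σ) * u (t₀ + σ)) := by
  have hshift : ∀ σ ∈ uIcc 0 τ,
      HasDerivAt (fun σ => z (t₀ + σ)) (F + α * u (t₀ + σ)) σ := by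
    intro σ hσ
    rw [uIcc_of_le hτ.le] at hσ
    exact (hz (t₀ + σ) ⟨by linarith [hσ.1], by linarith [hσ.2]⟩).comp_const_add t₀ σ
  have hestimate := integral_weighted_eq_of_hasDerivAt hshift
    ((by fun_prop : Continuous fun σ => α * u (t₀ + σ)).intervalIntegrable (μ := volume) 0 τ)
  simp only [mul_assoc, mul_left_comm _ α] at hestimate ⊢
  rw [hestimate]
  field_simp
end

section
/- Let τ > 0, α, F ∈ ℝ, let u : ℝ → ℝ be continuous, and let z : ℝ → ℝ be twice differentiable with z''(t) = F + α · u(t) for all t in the interval [t₀, t₀ + τ] (i.e. the unknown term of the second-order ultra-local model is constant on this window). Then the second-order algebraic estimator recovers F exactly: F = (60/τ⁵) · ∫₀^τ (τ² - 6τσ + 6σ²) · z(t₀ + σ) dσ - (30α/τ⁵) · ∫₀^τ σ²(τ - σ)² · u(t₀ + σ) dσ. In particular the estimate is independent of both initial conditions z(t₀) and z'(t₀), since the kernel τ² - 6τσ + 6σ² annihilates all affine functions of σ on [0, τ]. -/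
/-!
The kernel `τ² - 6τσ + 6σ²` is the second derivative of `P(σ) = σ²(τ - σ)²/2`, and both `P` and
`P'` vanish at `σ = 0` and `σ = τ`. Integrating by parts twice therefore moves both derivatives
onto `z` without boundary terms, which is why `z(t₀)` and `z'(t₀)` drop out:
`∫ P'' z = ∫ P z'' = F ∫ P + α ∫ P u`, and `∫₀^τ P = τ⁵/60`.
-/

open Set intervalIntegral

theorem integral_deriv_deriv_mul_eq_mul_deriv_deriv {a b : ℝ} {p p' p'' w w' w'' : ℝ → ℝ}
    (hp : ∀ x ∈ uIcc a b, HasDerivAt p (p' x) x) (hp' : ∀ x ∈ uIcc a b, HasDerivAt p' (p'' x) x)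
    (hw : ∀ x ∈ uIcc a b, HasDerivAt w (w' x) x) (hw' : ∀ x ∈ uIcc a b, HasDerivAt w' (w'' x) x)
    (hp'' : IntervalIntegrable p'' MeasureTheory.volume a b)
    (hw'' : IntervalIntegrable w'' MeasureTheory.volume a b)
    (hpa : p a = 0) (hpb : p b = 0) (hp'a : p' a = 0) (hp'b : p' b = 0) :
    ∫ x in a..b, p'' x * w x = ∫ x in a..b, p x * w'' x := by
  have hp'_int : IntervalIntegrable p' MeasureTheory.volume a b :=
    ContinuousOn.intervalIntegrable fun x hx => (hp' x hx).continuousAt.continuousWithinAt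
  have hw'_int : IntervalIntegrable w' MeasureTheory.volume a b :=
    ContinuousOn.intervalIntegrable fun x hx => (hw' x hx).continuousAt.continuousWithinAt
  simp_rw [mul_comm (p'' _), mul_comm (p _)]
  rw [integral_mul_deriv_eq_deriv_mul hw hp' hw'_int hp'',
    integral_mul_deriv_eq_deriv_mul hw' hp hw'' hp'_int, hpa, hpb, hp'a, hp'b]
  ring

noncomputable def windowWeight (τ σ : ℝ) : ℝ := σ ^ 2 * (τ - σ) ^ 2 / 2

theorem hasDerivAt_windowWeight (τ σ : ℝ) :
    HasDerivAt (windowWeight τ) (σ * (τ - σ) * (τ - 2 * σ)) σ :=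
  (((hasDerivAt_pow 2 σ).mul (((hasDerivAt_id' σ).const_sub τ).pow 2)).div_const 2).congr_deriv
    (by simp only [Pi.pow_apply]; push_cast; ring)

theorem hasDerivAt_windowWeight_deriv (τ σ : ℝ) :
    HasDerivAt (fun s => s * (τ - s) * (τ - 2 * s)) (τ ^ 2 - 6 * τ * σ + 6 * σ ^ 2) σ :=
  (((hasDerivAt_id' σ).mul ((hasDerivAt_id' σ).const_sub τ)).mul
    (((hasDerivAt_id' σ).const_mul 2).const_sub τ)).congr_deriv (by simp only [Pi.mul_apply]; ring)

theorem integral_windowWeight (τ : ℝ) : ∫ σ in (0:ℝ)..τ, windowWeight τ σ = τ ^ 5 / 60 := by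
  have h : windowWeight τ = fun σ => τ ^ 2 / 2 * σ ^ 2 - τ * σ ^ 3 + 1 / 2 * σ ^ 4 := by
    funext σ; unfold windowWeight; ring
  rw [h, integral_add, integral_sub, integral_const_mul, integral_const_mul, integral_const_mul]
  · simp only [integral_pow]; ring
  all_goals exact Continuous.intervalIntegrable (by fun_prop) _ _

/-- Second-order algebraic estimator of the model-free setting: if the
ultra-local model z'' = F + α u holds with F constant on the window
[t₀, t₀ + τ], then the estimator recovers F exactly, independently of both
initial conditions z(t₀) and z'(t₀). -/
theorem second_order_algebraic_estimator_exact
    (τ α F : ℝ) (hτ : 0 < τ) (u z z' : ℝ → ℝ) (hu : Continuous u) (t₀ : ℝ)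
    (hz : ∀ t ∈ Set.Icc t₀ (t₀ + τ), HasDerivAt z (z' t) t)
    (hz' : ∀ t ∈ Set.Icc t₀ (t₀ + τ), HasDerivAt z' (F + α * u t) t) :
    F = (60 / τ ^ 5) *
        (∫ σ in (0:ℝ)..τ, (τ ^ 2 - 6 * τ * σ + 6 * σ ^ 2) * z (t₀ + σ))
      - (30 * α / τ ^ 5) *
        ∫ σ in (0:ℝ)..τ, σ ^ 2 * (τ - σ) ^ 2 * u (t₀ + σ) := by
  have hwindow : ∀ σ ∈ uIcc 0 τ, t₀ + σ ∈ Icc t₀ (t₀ + τ) := fun σ hσ => by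
    rw [uIcc_of_le hτ.le] at hσ
    exact ⟨by linarith [hσ.1], by linarith [hσ.2]⟩
  have hparts := integral_deriv_deriv_mul_eq_mul_deriv_deriv
    (fun σ _ => hasDerivAt_windowWeight τ σ) (fun σ _ => hasDerivAt_windowWeight_deriv τ σ)
    (fun σ hσ => (hz _ (hwindow σ hσ)).comp_const_add t₀ σ)
    (fun σ hσ => (hz' _ (hwindow σ hσ)).comp_const_add t₀ σ)
    (Continuous.intervalIntegrable (by fun_prop) 0 τ)
    (Continuous.intervalIntegrable (by fun_prop) 0 τ)
    (by simp [windowWeight]) (by simp [windowWeight]) (by simp) (by simp)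
  have hsplit : ∫ σ in (0:ℝ)..τ, windowWeight τ σ * (F + α * u (t₀ + σ))
      = F * (τ ^ 5 / 60) + α / 2 * ∫ σ in (0:ℝ)..τ, σ ^ 2 * (τ - σ) ^ 2 * u (t₀ + σ) := by
    rw [← integral_windowWeight τ, ← integral_const_mul, ← integral_const_mul, ← integral_add]
    · congr 1 with σ; unfold windowWeight; ring
    · exact Continuous.intervalIntegrable (by unfold windowWeight; fun_prop) _ _
    · exact Continuous.intervalIntegrable (by fun_prop) _ _
  rw [hparts, hsplit]
  field_simp
  ring
end

section
/- Let m, I_z, C_f, C_r, L_f, L_r, δ, V_x, V_y, r, a, b be real numbers with V_x ≠ 0, where r denotes the yaw rate ψ', a denotes V_y' and b denotes ψ''. Define the linear-tire lateral forces F_yf = C_f (δ - (V_y + r L_f)/V_x) and F_yr = -C_r (V_y - r L_r)/V_x, and assume the two-wheel vehicle model equations m(a + r V_x) = F_yf + F_yr and I_z b = L_f F_yf - L_r F_yr hold. Then the derivative of the second flat output z₂ = L_f m V_y - I_z ψ', namely ż₂ = L_f m a - I_z b, satisfies ż₂ = (L_f + L_r) F_yr - L_f m V_x r = -C_r (L_f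 + L_r)(V_y - r L_r)/V_x - L_f m V_x r. In particular ż₂ does not depend on the steering input δ nor on the front cornering stiffness C_f. -/
/-- In the two-wheel vehicle model with linear tire forces, the derivative of
the second flat output z₂ = L_f m V_y - I_z ψ' does not depend on the steering
input δ nor on the front cornering stiffness C_f:
ż₂ = (L_f + L_r) F_yr - L_f m V_x r = -C_r (L_f + L_r)(V_y - r L_r)/V_x - L_f m V_x r. -/
theorem flat_output_derivative_independent_of_steering
    (m I_z C_f C_r L_f L_r δ V_x V_y r a b : ℝ) (hVx : V_x ≠ 0)
    (F_yf F_yr : ℝ)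
    (hFyf : F_yf = C_f * (δ - (V_y + r * L_f) / V_x))
    (hFyr : F_yr = -C_r * (V_y - r * L_r) / V_x)
    (hlat : m * (a + r * V_x) = F_yf + F_yr)
    (hyaw : I_z * b = L_f * F_yf - L_r * F_yr) :
    L_f * m * a - I_z * b = (L_f + L_r) * F_yr - L_f * m * V_x * r ∧
    L_f * m * a - I_z * b =
      -C_r * (L_f + L_r) * (V_y - r * L_r) / V_x - L_f * m * V_x * r := by
  have h1 : L_f * m * a - I_z * b = (L_f + L_r) * F_yr - L_f * m * V_x * r := by
    linear_combination L_f * hlat - hyaw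
  refine ⟨h1, ?_⟩
  rw [h1, hFyr]
  field_simp
end

section
/- Let m, I_z, C_f, C_r, L_f, L_r, δ, V_x, V_y, r, a, b be real numbers with V_x ≠ 0, where r denotes the yaw rate ψ', a denotes V_y' and b denotes ψ''. Define F_yf = C_f (δ - (V_y + r L_f)/V_x), F_yr = -C_r (V_y - r L_r)/V_x, and assume m(a + r V_x) = F_yf + F_yr and I_z b = L_f F_yf - L_r F_yr. Set z₁ = V_x, z₂ = L_f m V_y - I_z r, ż₂ = L_f m a - I_z b, and D = C_r (L_f + L_r)(I_z - L_r L_f m) + (L_f m z₁)². If D ≠ 0, then the yaw rate is recovered from the flat outputs by r = -( L_f m z₁ ż₂ + C_r (L_f + L_r) z₂ ) / D. -/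
/-- Flatness of the two-wheel vehicle model: the yaw rate r = ψ' is recovered
from the flat outputs z₁ = V_x, z₂ = L_f m V_y - I_z ψ' and ż₂. -/
theorem yaw_rate_from_flat_outputs
    (m I_z C_f C_r L_f L_r δ V_x V_y r a b : ℝ) (hVx : V_x ≠ 0)
    (F_yf F_yr : ℝ)
    (hFyf : F_yf = C_f * (δ - (V_y + r * L_f) / V_x))
    (hFyr : F_yr = -C_r * (V_y - r * L_r) / V_x)
    (hlat : m * (a + r * V_x) = F_yf + F_yr)
    (hyaw : I_z * b = L_f * F_yf - L_r * F_yr)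
    (z₁ z₂ dz₂ D : ℝ)
    (hz₁ : z₁ = V_x) (hz₂ : z₂ = L_f * m * V_y - I_z * r)
    (hdz₂ : dz₂ = L_f * m * a - I_z * b)
    (hD : D = C_r * (L_f + L_r) * (I_z - L_r * L_f * m) + (L_f * m * z₁) ^ 2)
    (hDne : D ≠ 0) :
    r = -(L_f * m * z₁ * dz₂ + C_r * (L_f + L_r) * z₂) / D := by
  subst hFyf hFyr hz₁ hz₂ hdz₂ hD
  field_simp at hlat hyaw
  rw [eq_div_iff hDne]
  linear_combination (L_f * m * L_f) * hlat - (L_f * m) * hyaw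
end

section
/- Let m, I_z, C_f, C_r, L_f, L_r, δ, V_x, V_y, r, a, b be real numbers with V_x ≠ 0, m ≠ 0 and L_f ≠ 0, where r denotes the yaw rate ψ', a denotes V_y' and b denotes ψ''. Define F_yf = C_f (δ - (V_y + r L_f)/V_x), F_yr = -C_r (V_y - r L_r)/V_x, and assume m(a + r V_x) = F_yf + F_yr and I_z b = L_f F_yf - L_r F_yr. Set z₁ = V_x, z₂ = L_f m V_y - I_z r, ż₂ = L_f m a - I_z b, and D = C_r (L_f + L_r)(I_z - L_r L_f m) + (L_f m z₁)². If D ≠ 0, then the lateral speed is recovered from the flat outputs by V_y = z₂/(L_f m) - (I_z/(L_f m)) · ( L_f m z₁ ż₂ + C_r (L_f + L_r) z₂ ) / D. -/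
/-! Multiplying the lateral equation by `L_f` and subtracting the yaw equation eliminates the
front tire force, so `ż₂ = (L_f + L_r) F_yr - L_f m r V_x`. With the linear rear tire model this
and `z₂ = L_f m V_y - I_z r` form a linear system in `(V_y, r)` of determinant `D`; solving it
for the yaw rate `r` and substituting back into `z₂` gives `V_y`. -/

theorem flat_output_deriv_eq_rear_force {m I_z L_f L_r V_x r a b F_yf F_yr dz₂ : ℝ}
    (hlat : m * (a + r * V_x) = F_yf + F_yr)
    (hyaw : I_z * b = L_f * F_yf - L_r * F_yr)
    (hdz₂ : dz₂ = L_f * m * a - I_z * b) :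
    dz₂ = (L_f + L_r) * F_yr - L_f * m * r * V_x := by
  linear_combination hdz₂ + L_f * hlat - hyaw

theorem yaw_rate_eq_of_flat_outputs {m I_z C_r L_f L_r V_x V_y r F_yr z₂ dz₂ D : ℝ}
    (hVx : V_x ≠ 0) (hDne : D ≠ 0)
    (hFyr : F_yr = -C_r * (V_y - r * L_r) / V_x)
    (hdz₂ : dz₂ = (L_f + L_r) * F_yr - L_f * m * r * V_x)
    (hz₂ : z₂ = L_f * m * V_y - I_z * r)
    (hD : D = C_r * (L_f + L_r) * (I_z - L_r * L_f * m) + (L_f * m * V_x) ^ 2) :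
    r = -((L_f * m * V_x * dz₂ + C_r * (L_f + L_r) * z₂) / D) := by
  subst hdz₂ hFyr
  field_simp
  linear_combination r * hD + C_r * (L_f + L_r) * hz₂

theorem lateral_speed_eq_of_yaw_rate {m I_z L_f V_y r z₂ : ℝ} (hm : m ≠ 0) (hLf : L_f ≠ 0)
    (hz₂ : z₂ = L_f * m * V_y - I_z * r) :
    V_y = z₂ / (L_f * m) + I_z / (L_f * m) * r := by
  field_simp
  linear_combination -hz₂

theorem lateral_speed_from_flat_outputs_general
    (m I_z C_r L_f L_r V_x V_y r a b : ℝ)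
    (hVx : V_x ≠ 0) (hm : m ≠ 0) (hLf : L_f ≠ 0)
    (F_yf F_yr : ℝ)
    (hFyr : F_yr = -C_r * (V_y - r * L_r) / V_x)
    (hlat : m * (a + r * V_x) = F_yf + F_yr)
    (hyaw : I_z * b = L_f * F_yf - L_r * F_yr)
    (z₁ z₂ dz₂ D : ℝ)
    (hz₁ : z₁ = V_x) (hz₂ : z₂ = L_f * m * V_y - I_z * r)
    (hdz₂ : dz₂ = L_f * m * a - I_z * b)
    (hD : D = C_r * (L_f + L_r) * (I_z - L_r * L_f * m) + (L_f * m * z₁) ^ 2)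
    (hDne : D ≠ 0) :
    V_y = z₂ / (L_f * m)
      - (I_z / (L_f * m)) *
        ((L_f * m * z₁ * dz₂ + C_r * (L_f + L_r) * z₂) / D) := by
  subst hz₁
  have hr := yaw_rate_eq_of_flat_outputs hVx hDne hFyr
    (flat_output_deriv_eq_rear_force hlat hyaw hdz₂) hz₂ hD
  rw [lateral_speed_eq_of_yaw_rate hm hLf hz₂, hr]
  ring

/-- Flatness of the two-wheel vehicle model: the lateral speed V_y is recovered
from the flat outputs z₁ = V_x, z₂ = L_f m V_y - I_z ψ' and ż₂. -/
theorem lateral_speed_from_flat_outputs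
    (m I_z C_f C_r L_f L_r δ V_x V_y r a b : ℝ)
    (hVx : V_x ≠ 0) (hm : m ≠ 0) (hLf : L_f ≠ 0)
    (F_yf F_yr : ℝ)
    (hFyf : F_yf = C_f * (δ - (V_y + r * L_f) / V_x))
    (hFyr : F_yr = -C_r * (V_y - r * L_r) / V_x)
    (hlat : m * (a + r * V_x) = F_yf + F_yr)
    (hyaw : I_z * b = L_f * F_yf - L_r * F_yr)
    (z₁ z₂ dz₂ D : ℝ)
    (hz₁ : z₁ = V_x) (hz₂ : z₂ = L_f * m * V_y - I_z * r)
    (hdz₂ : dz₂ = L_f * m * a - I_z * b)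
    (hD : D = C_r * (L_f + L_r) * (I_z - L_r * L_f * m) + (L_f * m * z₁) ^ 2)
    (hDne : D ≠ 0) :
    V_y = z₂ / (L_f * m)
      - (I_z / (L_f * m)) *
        ((L_f * m * z₁ * dz₂ + C_r * (L_f + L_r) * z₂) / D) :=
  lateral_speed_from_flat_outputs_general m I_z C_r L_f L_r V_x V_y r a b hVx hm hLf F_yf F_yr hFyr
    hlat hyaw z₁ z₂ dz₂ D hz₁ hz₂ hdz₂ hD hDne
end
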